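/- Let (L →δ E →∂ G, ▷, {,}) be a 2-crossed module with E finite. Define ψ, φ: E × E → L by ψ(A,B) = {A,B} and φ(A,B) = A ▷' {A⁻¹, B}. Then (ψ, φ) is a framed Reidemeister pair for the crossed module (δ: L → E, ▷'). In particular, the unique solution of δ(φ(A,Z))·A = Z is given by the inverse of the bijection A ↦ ∂(A) ▷ A of E, and g(A) = δ(ψ(A,A))⁻¹·A equals ∂(A) ▷ A. -/
import Mathlib


/-- A 2-crossed module `(L →δ E →∂ G, ▷, {,})`: groups `L`, `E`, `G`,
homomorphisms `dl = δ : L → E` and `pd = ∂ : E → G` with `∂ ∘ δ` trivial,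
left actions `▷` of `G` by automorphisms on `L` (`actL`) and on `E` (`actE`)
making `δ` and `∂` equivariant, and a `G`-equivariant Peiffer lifting
`pl = {,} : E × E → L` satisfying the usual axioms. -/
structure TwoCrossedModule (L E G : Type*) [Group L] [Group E] [Group G] where
  /-- `δ : L → E` -/
  dl : L →* E
  /-- `∂ : E → G` -/
  pd : E →* G
  /-- the action of `G` on `L` -/
  actL : G → L → L
  /-- the action of `G` on `E` -/
  actE : G → E → E
  /-- the Peiffer lifting `{,} : E × E → L` -/
  pl : E → E → L
  pd_dl : ∀ l, pd (dl l) = 1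
  actL_one : ∀ l, actL 1 l = l
  actL_mul : ∀ g h l, actL (g * h) l = actL g (actL h l)
  actL_hom : ∀ g l k, actL g (l * k) = actL g l * actL g k
  actE_one : ∀ e, actE 1 e = e
  actE_mul : ∀ g h e, actE (g * h) e = actE g (actE h e)
  actE_hom : ∀ g e f, actE g (e * f) = actE g e * actE g f
  dl_equiv : ∀ g l, dl (actL g l) = actE g (dl l)
  pd_equiv : ∀ g e, pd (actE g e) = g * pd e * g⁻¹
  pl_equiv : ∀ g e f, actL g (pl e f) = pl (actE g e) (actE g f)
  dl_pl : ∀ e f, dl (pl e f) = e * f * e⁻¹ * actE (pd e) f⁻¹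
  pl_dl_dl : ∀ l k, pl (dl l) (dl k) = l * k * l⁻¹ * k⁻¹
  pl_dl_cancel : ∀ l e, pl (dl l) e * pl e (dl l) = l * actL (pd e) l⁻¹
  pl_mul_left : ∀ e f g, pl (e * f) g = pl e (f * g * f⁻¹) * actL (pd e) (pl f g)
  pl_mul_right : ∀ e f g,
    pl e (f * g) = pl e f * (pl e g * pl ((dl (pl e g))⁻¹) (actE (pd e) f))

namespace TwoCrossedModule

variable {L E G : Type*} [Group L] [Group E] [Group G]

/-- The operation `e ▷' l := l·{δ(l)⁻¹, e}`, a left action of `E` on `L`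
by automorphisms, making `(δ : L → E, ▷')` a crossed module. -/
def trp (T : TwoCrossedModule L E G) (e : E) (l : L) : L :=
  l * T.pl ((T.dl l)⁻¹) e

end TwoCrossedModule

namespace TwoCrossedModule

variable {L E G : Type*} [Group L] [Group E] [Group G]
variable (M : TwoCrossedModule L E G)

lemma actL_one_r (g : G) : M.actL g (1 : L) = 1 := by
  have h := M.actL_hom g 1 1
  rw [mul_one] at h
  exact left_eq_mul.mp h

lemma actL_inv (g : G) (l : L) : M.actL g l⁻¹ = (M.actL g l)⁻¹ := by
  have h := M.actL_hom g l l⁻¹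
  rw [mul_inv_cancel, M.actL_one_r] at h
  exact eq_inv_of_mul_eq_one_right h.symm

lemma actE_one_r (g : G) : M.actE g (1 : E) = 1 := by
  have h := M.actE_hom g 1 1
  rw [mul_one] at h
  exact left_eq_mul.mp h

lemma actE_inv (g : G) (e : E) : M.actE g e⁻¹ = (M.actE g e)⁻¹ := by
  have h := M.actE_hom g e e⁻¹
  rw [mul_inv_cancel, M.actE_one_r] at h
  exact eq_inv_of_mul_eq_one_right h.symm

lemma actE_pd_dl (l : L) (e : E) : M.actE (M.pd (M.dl l)) e = e := by
  rw [M.pd_dl, M.actE_one]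

lemma actL_pd_dl (l k : L) : M.actL (M.pd (M.dl l)) k = k := by
  rw [M.pd_dl, M.actL_one]

lemma pl_one_left (e : E) : M.pl 1 e = 1 := by
  have h := M.pl_mul_left 1 1 e
  simp only [mul_one, one_mul, inv_one, map_one, M.actL_one] at h
  exact left_eq_mul.mp h

lemma pl_one_right (e : E) : M.pl e 1 = 1 := by
  have h := M.pl_dl_cancel 1 e
  simp only [map_one, inv_one, M.actL_one_r, mul_one, M.pl_one_left, one_mul] at h
  exact h

/-- δ(e ▷' l) = e δ(l) e⁻¹ -/
lemma dl_trp (e : E) (l : L) : M.dl (M.trp e l) = e * M.dl l * e⁻¹ := by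
  unfold trp
  rw [map_mul, M.dl_pl]
  rw [map_inv, M.pd_dl] ; rw [inv_one, M.actE_one]
  group

/-- δ(l) ▷' k = l k l⁻¹ -/
lemma trp_dl (l k : L) : M.trp (M.dl l) k = l * k * l⁻¹ := by
  unfold trp
  rw [← map_inv, M.pl_dl_dl]
  group

/-- δ({δl⁻¹, e}) = δl⁻¹ e δl e⁻¹ -/
lemma dl_pl_dl_inv (l : L) (e : E) :
    M.dl (M.pl (M.dl l)⁻¹ e) = (M.dl l)⁻¹ * e * M.dl l * e⁻¹ := by
  rw [← map_inv M.dl, M.dl_pl, M.pd_dl, M.actE_one, map_inv]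
  group


/-- ▷' distributes over products -/
lemma trp_mul_right (e : E) (l k : L) : M.trp e (l * k) = M.trp e l * M.trp e k := by
  have hA : M.pl (M.dl (l * k))⁻¹ e
      = M.pl (M.dl k)⁻¹ ((M.dl l)⁻¹ * e * M.dl l) * M.pl (M.dl l)⁻¹ e := by
    have h := M.pl_mul_left (M.dl k)⁻¹ (M.dl l)⁻¹ e
    rw [map_inv M.pd (M.dl k), M.pd_dl, inv_one, M.actL_one, inv_inv] at h
    rw [map_mul, mul_inv_rev, h]
  have hB : (M.dl l)⁻¹ * e * M.dl l = M.dl (M.pl (M.dl l)⁻¹ e) * e := by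
    rw [M.dl_pl_dl_inv]; group
  have hC : M.pl (M.dl k)⁻¹ (M.dl (M.pl (M.dl l)⁻¹ e) * e)
      = (k⁻¹ * M.pl (M.dl l)⁻¹ e * k * (M.pl (M.dl l)⁻¹ e)⁻¹)
        * (M.pl (M.dl l)⁻¹ e * M.pl (M.dl k)⁻¹ e * (M.pl (M.dl l)⁻¹ e)⁻¹) := by
    have h := M.pl_mul_right (M.dl k)⁻¹ (M.dl (M.pl (M.dl l)⁻¹ e)) e
    rw [map_inv M.pd (M.dl k), M.pd_dl, inv_one, M.actE_one] at h
    have h2 := M.trp_dl (M.pl (M.dl l)⁻¹ e) (M.pl (M.dl k)⁻¹ e)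
    unfold trp at h2
    have h3 : M.pl (M.dl k)⁻¹ (M.dl (M.pl (M.dl l)⁻¹ e))
        = k⁻¹ * M.pl (M.dl l)⁻¹ e * k * (M.pl (M.dl l)⁻¹ e)⁻¹ := by
      rw [← map_inv M.dl, M.pl_dl_dl]; group
    rw [h, h2, h3]
  unfold trp
  rw [hA, hB, hC]
  group

lemma trp_one_r (e : E) : M.trp e (1 : L) = 1 := by
  unfold trp; rw [map_one, inv_one, M.pl_one_left, mul_one]

lemma trp_inv (e : E) (l : L) : M.trp e l⁻¹ = (M.trp e l)⁻¹ := by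
  have h := M.trp_mul_right e l l⁻¹
  rw [mul_inv_cancel, M.trp_one_r] at h
  exact eq_inv_of_mul_eq_one_right h.symm

lemma trp_one (l : L) : M.trp 1 l = l := by
  unfold trp; rw [M.pl_one_right, mul_one]

lemma trp_mul_left (e f : E) (l : L) : M.trp (e * f) l = M.trp e (M.trp f l) := by
  have h := M.pl_mul_right (M.dl l)⁻¹ e f
  rw [map_inv M.pd (M.dl l), M.pd_dl, inv_one, M.actE_one] at h
  have expand : M.trp e (M.trp f l) = M.trp e l * M.trp e (M.pl (M.dl l)⁻¹ f) := by
    rw [← M.trp_mul_right]; rfl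
  rw [expand]
  unfold trp
  rw [h]
  group

/-- (e ▷' l) · {e, δ(l)⁻¹} = ∂(e) ▷ l -/
lemma trp_cancel (e : E) (l : L) :
    M.trp e l * M.pl e (M.dl l)⁻¹ = M.actL (M.pd e) l := by
  have h := M.pl_dl_cancel l⁻¹ e
  rw [map_inv, inv_inv] at h
  unfold trp
  rw [mul_assoc, h]
  group

/-- {δ(l), e} = l · {δ(l)⁻¹, e}⁻¹ · l⁻¹ -/
lemma pl_dl_eq (l : L) (e : E) :
    M.pl (M.dl l) e = l * (M.pl (M.dl l)⁻¹ e)⁻¹ * l⁻¹ := by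
  have s1 : (1 : L) = M.pl (M.dl l) ((M.dl l)⁻¹ * e * M.dl l) * M.pl (M.dl l)⁻¹ e := by
    have h := M.pl_mul_left (M.dl l) (M.dl l)⁻¹ e
    rw [mul_inv_cancel, M.pl_one_left, M.pd_dl, M.actL_one, inv_inv] at h
    exact h
  have s2 : (M.dl l)⁻¹ * e * M.dl l = M.dl (M.pl (M.dl l)⁻¹ e) * e := by
    rw [M.dl_pl_dl_inv]; group
  have s3 : M.pl (M.dl l) (M.dl (M.pl (M.dl l)⁻¹ e) * e)
      = (l * M.pl (M.dl l)⁻¹ e * l⁻¹ * (M.pl (M.dl l)⁻¹ e)⁻¹)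
        * (M.pl (M.dl l)⁻¹ e * M.pl (M.dl l) e * (M.pl (M.dl l)⁻¹ e)⁻¹) := by
    have h := M.pl_mul_right (M.dl l) (M.dl (M.pl (M.dl l)⁻¹ e)) e
    rw [M.pd_dl, M.actE_one] at h
    have h2 := M.trp_dl (M.pl (M.dl l)⁻¹ e) (M.pl (M.dl l) e)
    unfold trp at h2
    rw [h, h2, M.pl_dl_dl]
  rw [s2, s3] at s1
  calc M.pl (M.dl l) e
      = (l * M.pl (M.dl l)⁻¹ e * l⁻¹)⁻¹
        * ((l * M.pl (M.dl l)⁻¹ e * l⁻¹ * (M.pl (M.dl l)⁻¹ e)⁻¹)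
          * (M.pl (M.dl l)⁻¹ e * M.pl (M.dl l) e * (M.pl (M.dl l)⁻¹ e)⁻¹)
          * M.pl (M.dl l)⁻¹ e) := by group
    _ = (l * M.pl (M.dl l)⁻¹ e * l⁻¹)⁻¹ * 1 := by rw [← s1]
    _ = l * (M.pl (M.dl l)⁻¹ e)⁻¹ * l⁻¹ := by group

/-- δ({A⁻¹, B}) = A⁻¹ B A (∂A⁻¹ ▷ B)⁻¹ -/
lemma dl_pl_inv (A B : E) :
    M.dl (M.pl A⁻¹ B) = A⁻¹ * B * A * (M.actE (M.pd A)⁻¹ B)⁻¹ := by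
  rw [M.dl_pl, map_inv, M.actE_inv, inv_inv]

/-- R2 key: φ(X,Y)·ψ(X, ∂X⁻¹▷Y) = 1 -/
lemma phi_psi (X Y : E) :
    M.trp X (M.pl X⁻¹ Y) * M.pl X (M.actE (M.pd X)⁻¹ Y) = 1 := by
  have hl : M.dl (M.pl X⁻¹ Y)
      = X⁻¹ * Y * X * (M.actE (M.pd X)⁻¹ Y)⁻¹ := M.dl_pl_inv X Y
  have e1 : M.pl X (X⁻¹ * Y * X) * M.actL (M.pd X) (M.pl X⁻¹ Y) = 1 := by
    have h := M.pl_mul_left X X⁻¹ Y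
    rw [mul_inv_cancel, M.pl_one_left, inv_inv] at h
    exact h.symm
  have e2 : X⁻¹ * Y * X = M.dl (M.pl X⁻¹ Y) * M.actE (M.pd X)⁻¹ Y := by
    rw [hl]; group
  have e3 : M.pl X (M.dl (M.pl X⁻¹ Y) * M.actE (M.pd X)⁻¹ Y)
      = M.pl X (M.dl (M.pl X⁻¹ Y))
        * (M.actL (M.pd X) (M.pl X⁻¹ Y) * M.pl X (M.actE (M.pd X)⁻¹ Y)
            * (M.actL (M.pd X) (M.pl X⁻¹ Y))⁻¹) := by
    have h := M.pl_mul_right X (M.dl (M.pl X⁻¹ Y)) (M.actE (M.pd X)⁻¹ Y)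
    rw [← M.dl_equiv] at h
    have h2 := M.trp_dl (M.actL (M.pd X) (M.pl X⁻¹ Y)) (M.pl X (M.actE (M.pd X)⁻¹ Y))
    unfold trp at h2
    rw [h, h2]
  have e5 : M.pl X (M.dl (M.pl X⁻¹ Y))
      = M.pl X⁻¹ Y * M.pl (M.dl (M.pl X⁻¹ Y))⁻¹ X
        * (M.actL (M.pd X) (M.pl X⁻¹ Y))⁻¹ := by
    have h := M.pl_dl_cancel (M.pl X⁻¹ Y) X
    rw [M.pl_dl_eq, M.actL_inv] at h
    calc M.pl X (M.dl (M.pl X⁻¹ Y))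
        = (M.pl X⁻¹ Y * (M.pl (M.dl (M.pl X⁻¹ Y))⁻¹ X)⁻¹ * (M.pl X⁻¹ Y)⁻¹)⁻¹
          * (M.pl X⁻¹ Y * (M.pl (M.dl (M.pl X⁻¹ Y))⁻¹ X)⁻¹ * (M.pl X⁻¹ Y)⁻¹
            * M.pl X (M.dl (M.pl X⁻¹ Y))) := by group
      _ = (M.pl X⁻¹ Y * (M.pl (M.dl (M.pl X⁻¹ Y))⁻¹ X)⁻¹ * (M.pl X⁻¹ Y)⁻¹)⁻¹
          * (M.pl X⁻¹ Y * (M.actL (M.pd X) (M.pl X⁻¹ Y))⁻¹) := by rw [h]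
      _ = M.pl X⁻¹ Y * M.pl (M.dl (M.pl X⁻¹ Y))⁻¹ X
          * (M.actL (M.pd X) (M.pl X⁻¹ Y))⁻¹ := by group
  rw [e2, e3, e5] at e1
  have hC : M.pl X (M.actE (M.pd X)⁻¹ Y)
      = (M.pl (M.dl (M.pl X⁻¹ Y))⁻¹ X)⁻¹ * (M.pl X⁻¹ Y)⁻¹ := by
    calc M.pl X (M.actE (M.pd X)⁻¹ Y)
        = (M.pl X⁻¹ Y * M.pl (M.dl (M.pl X⁻¹ Y))⁻¹ X)⁻¹
          * (M.pl X⁻¹ Y * M.pl (M.dl (M.pl X⁻¹ Y))⁻¹ X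
              * (M.actL (M.pd X) (M.pl X⁻¹ Y))⁻¹
            * (M.actL (M.pd X) (M.pl X⁻¹ Y) * M.pl X (M.actE (M.pd X)⁻¹ Y)
                * (M.actL (M.pd X) (M.pl X⁻¹ Y))⁻¹)
            * M.actL (M.pd X) (M.pl X⁻¹ Y)) := by group
      _ = (M.pl X⁻¹ Y * M.pl (M.dl (M.pl X⁻¹ Y))⁻¹ X)⁻¹ * 1 := by rw [e1]
      _ = (M.pl (M.dl (M.pl X⁻¹ Y))⁻¹ X)⁻¹ * (M.pl X⁻¹ Y)⁻¹ := by group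
  unfold trp
  rw [hC]
  group


lemma phi_eq (A B : E) :
    M.trp A (M.pl A⁻¹ B) = (M.pl A (M.actE (M.pd A)⁻¹ B))⁻¹ :=
  eq_inv_of_mul_eq_one_left (M.phi_psi A B)

/-- simplification of the inner argument `A⁻¹ δ(φ(A,B))⁻¹ B A = ∂A⁻¹ ▷ B` -/
lemma Zsimp (A B : E) :
    A⁻¹ * (M.dl (M.trp A (M.pl A⁻¹ B)))⁻¹ * B * A = M.actE (M.pd A)⁻¹ B := by
  rw [M.dl_trp, M.dl_pl_inv]
  group

/-- `{e, fg} = {e,f} · ((∂e▷f) ▷' {e,g})` -/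
lemma pl_mul_right' (e f g : E) :
    M.pl e (f * g) = M.pl e f * M.trp (M.actE (M.pd e) f) (M.pl e g) := by
  rw [M.pl_mul_right]; rfl

lemma actE_cancel (g : G) (e : E) : M.actE g⁻¹ (M.actE g e) = e := by
  rw [← M.actE_mul, inv_mul_cancel, M.actE_one]

/-- core of R3 -/
lemma r3_core (t η γ : E) :
    M.pl t η * M.trp (M.actE (M.pd t) η) (M.pl t γ) * M.actL (M.pd t) (M.pl η γ)
      = M.trp t (M.pl η γ) * (M.pl t (M.actE (M.pd η) γ)
          * M.trp (M.actE (M.pd t) (M.actE (M.pd η) γ)) (M.pl t η)) := by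
  rw [← M.pl_mul_right' t η γ, ← M.pl_mul_right' t (M.actE (M.pd η) γ) η]
  have h2 : M.actE (M.pd η) γ * η = (M.dl (M.pl η γ))⁻¹ * (η * γ) := by
    rw [M.dl_pl, M.actE_inv]; group
  rw [h2]
  have h3 : M.pl t ((M.dl (M.pl η γ))⁻¹ * (η * γ))
      = M.pl t (M.dl (M.pl η γ))⁻¹
        * ((M.actL (M.pd t) (M.pl η γ))⁻¹ * M.pl t (η * γ)
            * (M.actL (M.pd t) (M.pl η γ))) := by
    have h := M.pl_mul_right' t (M.dl (M.pl η γ))⁻¹ (η * γ)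
    rw [← map_inv M.dl, ← M.dl_equiv, M.trp_dl, M.actL_inv, map_inv M.dl] at h
    rw [h]
    group
  rw [h3, ← mul_assoc, M.trp_cancel]
  group

/-- `δ({A,A})⁻¹ · A = ∂A ▷ A` -/
lemma gmap (A : E) : (M.dl (M.pl A A))⁻¹ * A = M.actE (M.pd A) A := by
  rw [M.dl_pl, M.actE_inv]
  group

/-- `δ(φ(A,Z))·A = Z ↔ ∂A▷A = Z` -/
lemma solve_iff (A Z : E) :
    M.dl (M.trp A (M.pl A⁻¹ Z)) * A = Z ↔ M.actE (M.pd A) A = Z := by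
  have hz := M.Zsimp A Z
  constructor
  · intro h
    have h1 : M.actE (M.pd A)⁻¹ Z = A := by
      rw [← hz]
      calc A⁻¹ * (M.dl (M.trp A (M.pl A⁻¹ Z)))⁻¹ * Z * A
          = (M.dl (M.trp A (M.pl A⁻¹ Z)) * A)⁻¹ * Z * A := by group
        _ = Z⁻¹ * Z * A := by rw [h]
        _ = A := by group
    have h3 := congrArg (M.actE (M.pd A)) h1
    rw [← M.actE_mul, mul_inv_cancel, M.actE_one] at h3
    exact h3.symm
  · intro h
    have hA : M.actE (M.pd A)⁻¹ Z = A := by rw [← h, M.actE_cancel]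
    rw [hA] at hz
    calc M.dl (M.trp A (M.pl A⁻¹ Z)) * A
        = Z * (A * (A⁻¹ * (M.dl (M.trp A (M.pl A⁻¹ Z)))⁻¹ * Z * A)⁻¹) := by group
      _ = Z * (A * A⁻¹) := by rw [hz]
      _ = Z := by group

lemma pd_act_self (A : E) : M.pd (M.actE (M.pd A) A) = M.pd A := by
  rw [M.pd_equiv]; group

lemma act_self_injective : Function.Injective (fun A : E => M.actE (M.pd A) A) := by
  intro a b hab
  simp only at hab
  have hpd : M.pd a = M.pd b := by
    rw [← M.pd_act_self a, ← M.pd_act_self b, hab]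
  rw [hpd] at hab
  have := congrArg (M.actE (M.pd b)⁻¹) hab
  rwa [M.actE_cancel, M.actE_cancel] at this


lemma actE_cancel' (g : G) (e : E) : M.actE g (M.actE g⁻¹ e) = e := by
  rw [← M.actE_mul, mul_inv_cancel, M.actE_one]

lemma r3 (X Y t : E) :
    M.trp Y (M.pl Y⁻¹ X)
      * M.trp Y (M.trp t (M.pl t⁻¹ (Y⁻¹ * (M.dl (M.trp Y (M.pl Y⁻¹ X)))⁻¹ * X * Y)))
      * M.trp t (M.pl t⁻¹ Y)
    = M.trp X (M.trp t (M.pl t⁻¹ Y)) * M.trp t (M.pl t⁻¹ X)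
      * M.trp t (M.trp (t⁻¹ * (M.dl (M.trp t (M.pl t⁻¹ Y)))⁻¹ * Y * t)
          (M.pl (t⁻¹ * (M.dl (M.trp t (M.pl t⁻¹ Y)))⁻¹ * Y * t)⁻¹
            (t⁻¹ * (M.dl (M.trp t (M.pl t⁻¹ X)))⁻¹ * X * t))) := by
  rw [M.Zsimp Y X, M.Zsimp t Y, M.Zsimp t X]
  simp only [M.phi_eq]
  obtain ⟨η, rfl⟩ : ∃ η, Y = M.actE (M.pd t) η :=
    ⟨M.actE (M.pd t)⁻¹ Y, (M.actE_cancel' (M.pd t) Y).symm⟩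
  obtain ⟨γ, rfl⟩ : ∃ γ, X = M.actE (M.pd t) (M.actE (M.pd η) γ) :=
    ⟨M.actE (M.pd η)⁻¹ (M.actE (M.pd t)⁻¹ X), by
      rw [M.actE_cancel', M.actE_cancel']⟩
  have ha : M.actE (M.pd (M.actE (M.pd t) η))⁻¹
        (M.actE (M.pd t) (M.actE (M.pd η) γ)) = M.actE (M.pd t) γ := by
    rw [M.pd_equiv, ← M.actE_mul, ← M.actE_mul]
    exact congrArg (fun g => M.actE g γ) (by group)
  rw [ha]
  simp only [M.actE_cancel]
  rw [← M.pl_equiv]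
  simp only [M.trp_inv]
  have key := M.r3_core t η γ
  calc (M.actL (M.pd t) (M.pl η γ))⁻¹
        * (M.trp (M.actE (M.pd t) η) (M.pl t γ))⁻¹ * (M.pl t η)⁻¹
      = (M.pl t η * M.trp (M.actE (M.pd t) η) (M.pl t γ)
          * M.actL (M.pd t) (M.pl η γ))⁻¹ := by group
    _ = (M.trp t (M.pl η γ) * (M.pl t (M.actE (M.pd η) γ)
          * M.trp (M.actE (M.pd t) (M.actE (M.pd η) γ)) (M.pl t η)))⁻¹ := by
        rw [key]
    _ = (M.trp (M.actE (M.pd t) (M.actE (M.pd η) γ)) (M.pl t η))⁻¹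
        * (M.pl t (M.actE (M.pd η) γ))⁻¹ * (M.trp t (M.pl η γ))⁻¹ := by group


lemma r2 (X Y : E) :
    M.trp X (M.pl X⁻¹ Y)
      * M.pl X (X⁻¹ * (M.dl (M.trp X (M.pl X⁻¹ Y)))⁻¹ * Y * X) = 1 := by
  rw [M.Zsimp X Y]; exact M.phi_psi X Y


end TwoCrossedModule

/-- Given a crossed module `(pd : E → G, tr)`, a pair of functions
`ψ φ : G × G → E` is an *unframed Reidemeister pair* if:
(R1) `ψ(X,X) = 1`;
(R2) `φ(X,Y)·ψ(X,Z) = 1` where `Z = X⁻¹ ∂(φ(X,Y))⁻¹ Y X`;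
(R3) `φ(Y,X)·(Y ▷ φ(T,Z))·φ(T,Y) = (X ▷ φ(T,Y))·φ(T,X)·(T ▷ φ(V,W))`
where `Z = Y⁻¹ ∂(φ(Y,X))⁻¹ X Y`, `V = T⁻¹ ∂(φ(T,Y))⁻¹ Y T`,
`W = T⁻¹ ∂(φ(T,X))⁻¹ X T`. -/
def IsUnframedReidemeisterPair {E G : Type*} [Group E] [Group G]
    (pd : E →* G) (tr : G → E → E) (ψ φ : G → G → E) : Prop :=
  (∀ X, ψ X X = 1) ∧
  (∀ X Y, φ X Y * ψ X (X⁻¹ * (pd (φ X Y))⁻¹ * Y * X) = 1) ∧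
  (∀ X Y T,
    φ Y X * tr Y (φ T (Y⁻¹ * (pd (φ Y X))⁻¹ * X * Y)) * φ T Y =
      tr X (φ T Y) * φ T X *
        tr T (φ (T⁻¹ * (pd (φ T Y))⁻¹ * Y * T) (T⁻¹ * (pd (φ T X))⁻¹ * X * T)))

/-- Given a crossed module `(pd : E → G, tr)`, a pair of functions
`ψ φ : G × G → E` is a *framed Reidemeister pair* if conditions (R2) and (R3)
above hold, and moreover (i) for each `Z ∈ G` the equation `∂(φ(A,Z))·A = Z`
has a unique solution `A = f(Z)`, and (ii) the map `g(A) = ∂(ψ(A,A))⁻¹·A`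
satisfies `f ∘ g = g ∘ f = id`. -/
def IsFramedReidemeisterPair {E G : Type*} [Group E] [Group G]
    (pd : E →* G) (tr : G → E → E) (ψ φ : G → G → E) : Prop :=
  (∀ X Y, φ X Y * ψ X (X⁻¹ * (pd (φ X Y))⁻¹ * Y * X) = 1) ∧
  (∀ X Y T,
    φ Y X * tr Y (φ T (Y⁻¹ * (pd (φ Y X))⁻¹ * X * Y)) * φ T Y =
      tr X (φ T Y) * φ T X *
        tr T (φ (T⁻¹ * (pd (φ T Y))⁻¹ * Y * T) (T⁻¹ * (pd (φ T X))⁻¹ * X * T))) ∧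
  (∃ f : G → G,
    (∀ Z, pd (φ (f Z) Z) * f Z = Z) ∧
    (∀ Z A, pd (φ A Z) * A = Z → A = f Z) ∧
    (∀ A, f ((pd (ψ A A))⁻¹ * A) = A) ∧
    (∀ Z, (pd (ψ (f Z) (f Z)))⁻¹ * f Z = Z))

/-- Let `(L →δ E →∂ G, ▷, {,})` be a 2-crossed module with `E` finite.
With `ψ(A,B) = {A,B}` and `φ(A,B) = A ▷' {A⁻¹, B}`, the pair `(ψ, φ)` is a
framed Reidemeister pair for the crossed module `(δ : L → E, ▷')`.
In particular, the unique solution of `δ(φ(A,Z))·A = Z` is given by the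
inverse of the bijection `A ↦ ∂(A) ▷ A` of `E`, and
`g(A) = δ(ψ(A,A))⁻¹·A = ∂(A) ▷ A`. -/
theorem two_crossed_module_framed_reidemeister_pair {L E G : Type*}
    [Group L] [Group E] [Group G] [Finite E] (T : TwoCrossedModule L E G) :
    IsFramedReidemeisterPair T.dl (fun e l => T.trp e l)
      (fun A B => T.pl A B) (fun A B => T.trp A (T.pl A⁻¹ B)) ∧
    Function.Bijective (fun A : E => T.actE (T.pd A) A) ∧
    (∀ A Z : E,
      T.dl (T.trp A (T.pl A⁻¹ Z)) * A = Z ↔ T.actE (T.pd A) A = Z) ∧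
    (∀ A : E, (T.dl (T.pl A A))⁻¹ * A = T.actE (T.pd A) A) := by
  have hinj := T.act_self_injective
  have hbij : Function.Bijective (fun A : E => T.actE (T.pd A) A) :=
    Finite.injective_iff_bijective.mp hinj
  refine ⟨⟨fun X Y => T.r2 X Y, fun X Y t => T.r3 X Y t, ?_⟩,
    hbij, fun A Z => T.solve_iff A Z, fun A => T.gmap A⟩
  refine ⟨fun Z => (Equiv.ofBijective _ hbij).symm Z, ?_, ?_, ?_, ?_⟩
  · intro Z
    exact (T.solve_iff _ Z).mpr ((Equiv.ofBijective _ hbij).apply_symm_apply Z)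
  · intro Z A h
    have h2 := (T.solve_iff A Z).mp h
    exact (Equiv.eq_symm_apply (Equiv.ofBijective _ hbij)).mpr h2
  · intro A
    show (Equiv.ofBijective _ hbij).symm ((T.dl (T.pl A A))⁻¹ * A) = A
    rw [T.gmap A]
    exact (Equiv.ofBijective _ hbij).symm_apply_apply A
  · intro Z
    show (T.dl (T.pl ((Equiv.ofBijective _ hbij).symm Z)
      ((Equiv.ofBijective _ hbij).symm Z)))⁻¹
      * (Equiv.ofBijective _ hbij).symm Z = Z
    rw [T.gmap]
    exact (Equiv.ofBijective _ hbij).apply_symm_apply Z
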